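/- (Exact Tangent-Secant rule / FDR–Lfdr balance at the optimizer.) Let ε ∈ (0,1) and τ > 0, and define TPR, FPR, FDR, Lfdr as below. Suppose t* > 0 is a point at which the derivative of the function t ↦ TPR(t)/√(TPR(t)+FPR(t)) vanishes (in particular, any interior maximizer of this function). Then Lfdr(t*) = (1 + FDR(t*))/2. -/

import Mathlib

open Filter Set MeasureTheory

noncomputable def gaussPDF (t : ℝ) : ℝ := (Real.sqrt (2 * Real.pi))⁻¹ * Real.exp (-(t ^ 2) / 2)

/-- standard normal CDF Φ -/
noncomputable def normCDF (t : ℝ) : ℝ := ∫ x in Set.Iic t, gaussPDF x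

/-- survival function of |N(τ,1)| -/
noncomputable def psiBar (τ t : ℝ) : ℝ := (1 - normCDF (t - τ)) + normCDF (-t - τ)

noncomputable def tprFn (ε τ t : ℝ) : ℝ := ε * psiBar τ t

noncomputable def fprFn (ε t : ℝ) : ℝ := (1 - ε) * psiBar 0 t

noncomputable def idrFn (ε τ t : ℝ) : ℝ := ε * normCDF (-t - τ)

/-- clipping proxy separation -/
noncomputable def sepFn (ε τ t : ℝ) : ℝ :=
  2 * τ * (tprFn ε τ t - 2 * idrFn ε τ t) / Real.sqrt (tprFn ε τ t + fprFn ε t)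

/-- proxy false discovery rate -/
noncomputable def fdrFn (ε τ t : ℝ) : ℝ := fprFn ε t / (tprFn ε τ t + fprFn ε t)

/-- magnitude of derivative of TPR -/
noncomputable def tprD (ε τ t : ℝ) : ℝ := ε * (gaussPDF (t - τ) + gaussPDF (t + τ))

/-- magnitude of derivative of FPR -/
noncomputable def fprD (ε t : ℝ) : ℝ := 2 * (1 - ε) * gaussPDF t

/-- proxy local false discovery rate -/
noncomputable def lfdrFn (ε τ t : ℝ) : ℝ := fprD ε t / (tprD ε τ t + fprD ε t)

noncomputable def rhoStar (β : ℝ) : ℝ :=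
  if β ≤ 1 / 2 then 0 else if β ≤ 3 / 4 then β - 1 / 2 else (1 - Real.sqrt (1 - β)) ^ 2

noncomputable def qStar (r β : ℝ) : ℝ := if r ≤ β / 3 then 4 * r else (β + r) ^ 2 / (4 * r)

/-- sparsity ε_p = p^{-β} in the ARW model -/
noncomputable def epsP (β : ℝ) (p : ℕ) : ℝ := (p : ℝ) ^ (-β)

/-- strength τ_p = √(2 r log p) in the ARW model -/
noncomputable def tauP (r : ℝ) (p : ℕ) : ℝ := Real.sqrt (2 * r * Real.log p)

/-- threshold t_p(q) = √(2 q log p) -/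
noncomputable def tP (q : ℝ) (p : ℕ) : ℝ := Real.sqrt (2 * q * Real.log p)

/-- folded two-point mixture G_{ε,τ} -/
noncomputable def gMix (ε τ t : ℝ) : ℝ :=
  (1 - ε) * (normCDF t - normCDF (-t)) + ε * (normCDF (t - τ) - normCDF (-t - τ))

/-- ideal HC objective -/
noncomputable def hcObj (ε τ t : ℝ) : ℝ :=
  ((1 - gMix ε τ t) - psiBar 0 t) / Real.sqrt (gMix ε τ t * (1 - gMix ε τ t))

/-- useful feature discovery exponent δ(q) -/
noncomputable def deltaExp (β r q : ℝ) : ℝ :=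
  if q ≤ r then 1 - β else 1 - β - (Real.sqrt q - Real.sqrt r) ^ 2

/-- separation growth exponent γ(q) -/
noncomputable def gammaExp (β r q : ℝ) : ℝ :=
  deltaExp β r q - max (1 - q) (deltaExp β r q) / 2

/-! Setting the derivative of `T / √(T + F)` to zero gives `T (T' + F') = 2 T' (T + F)`, which
rearranges to `F' / (T' + F') = (1 + F / (T + F)) / 2`. For the Gaussian rates the derivatives are
`-tprD` and `-fprD`, whose signs cancel in the quotient. -/

open ProbabilityTheory

lemma gaussPDF_eq_gaussianPDFReal : gaussPDF = gaussianPDFReal 0 1 := by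
  ext t
  simp [gaussPDF, gaussianPDFReal]

lemma gaussPDF_pos (t : ℝ) : 0 < gaussPDF t := by
  rw [gaussPDF_eq_gaussianPDFReal]
  exact gaussianPDFReal_pos _ _ _ one_ne_zero

lemma gaussPDF_neg (t : ℝ) : gaussPDF (-t) = gaussPDF t := by
  simp [gaussPDF]

lemma continuous_gaussPDF : Continuous gaussPDF := by
  unfold gaussPDF
  fun_prop

lemma integrable_gaussPDF : Integrable gaussPDF := by
  rw [gaussPDF_eq_gaussianPDFReal]
  exact integrable_gaussianPDFReal _ _

lemma normCDF_pos (t : ℝ) : 0 < normCDF t := by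
  rw [normCDF, setIntegral_pos_iff_support_of_nonneg_ae
    (ae_of_all _ fun x => (gaussPDF_pos x).le) integrable_gaussPDF.integrableOn,
    Function.support_eq_univ fun x => (gaussPDF_pos x).ne', univ_inter]
  simp

lemma normCDF_le_one (t : ℝ) : normCDF t ≤ 1 := by
  have htotal : ∫ x, gaussPDF x = 1 := by
    rw [gaussPDF_eq_gaussianPDFReal]
    exact integral_gaussianPDFReal_eq_one _ one_ne_zero
  rw [← htotal]
  exact setIntegral_le_integral integrable_gaussPDF (ae_of_all _ fun x => (gaussPDF_pos x).le)

lemma hasDerivAt_normCDF (t : ℝ) : HasDerivAt normCDF (gaussPDF t) t := by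
  have hsplit : normCDF = fun u => normCDF 0 + ∫ x in (0 : ℝ)..u, gaussPDF x := by
    funext u
    rw [← intervalIntegral.integral_Iic_sub_Iic integrable_gaussPDF.integrableOn
      integrable_gaussPDF.integrableOn, normCDF, normCDF]
    ring
  rw [hsplit]
  exact (intervalIntegral.integral_hasDerivAt_right integrable_gaussPDF.intervalIntegrable
    (continuous_gaussPDF.stronglyMeasurableAtFilter _ _) continuous_gaussPDF.continuousAt).const_add _

lemma psiBar_pos (τ t : ℝ) : 0 < psiBar τ t := by
  have := normCDF_le_one (t - τ)
  have := normCDF_pos (-t - τ)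
  unfold psiBar
  linarith

lemma hasDerivAt_psiBar (τ t : ℝ) :
    HasDerivAt (psiBar τ) (-(gaussPDF (t - τ) + gaussPDF (t + τ))) t := by
  have hright := (hasDerivAt_normCDF (t - τ)).comp t ((hasDerivAt_id t).sub_const τ)
  have hleft := (hasDerivAt_normCDF (-t - τ)).comp t ((hasDerivAt_id t).neg.sub_const τ)
  refine (((hasDerivAt_const t 1).sub hright).add hleft).congr_deriv ?_
  rw [show -t - τ = -(t + τ) by ring, gaussPDF_neg]
  ring

lemma hasDerivAt_tprFn (ε τ t : ℝ) : HasDerivAt (tprFn ε τ) (-tprD ε τ t) t := by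
  refine ((hasDerivAt_psiBar τ t).const_mul ε).congr_deriv ?_
  rw [tprD]
  ring

lemma hasDerivAt_fprFn (ε t : ℝ) : HasDerivAt (fprFn ε) (-fprD ε t) t := by
  refine ((hasDerivAt_psiBar 0 t).const_mul (1 - ε)).congr_deriv ?_
  rw [fprD, sub_zero, add_zero, ← two_mul]
  ring

lemma mul_add_deriv_eq_of_hasDerivAt_div_sqrt_eq_zero {f g : ℝ → ℝ} {f' g' x : ℝ}
    (hf : HasDerivAt f f' x) (hg : HasDerivAt g g' x) (hpos : 0 < f x + g x)
    (hcrit : HasDerivAt (fun t => f t / √(f t + g t)) 0 x) :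
    f x * (f' + g') = 2 * f' * (f x + g x) := by
  set s := √(f x + g x)
  have hs_pos : 0 < s := Real.sqrt_pos.mpr hpos
  have hquot : HasDerivAt (fun t => f t / √(f t + g t))
      ((f' * s - f x * ((f' + g') / (2 * s))) / s ^ 2) x :=
    hf.div ((hf.add hg).sqrt hpos.ne') hs_pos.ne'
  have hnum : f' * s - f x * ((f' + g') / (2 * s)) = 0 := by
    simpa [hs_pos.ne'] using (hcrit.unique hquot).symm
  have hsq : s ^ 2 = f x + g x := Real.sq_sqrt hpos.le
  field_simp at hnum
  linear_combination -hnum + 2 * f' * hsq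

theorem tangent_secant_of_hasDerivAt_div_sqrt_eq_zero {f g : ℝ → ℝ} {f' g' x : ℝ}
    (hf : HasDerivAt f f' x) (hg : HasDerivAt g g' x) (hpos : 0 < f x + g x)
    (hne : f' + g' ≠ 0) (hcrit : HasDerivAt (fun t => f t / √(f t + g t)) 0 x) :
    g' / (f' + g') = (1 + g x / (f x + g x)) / 2 := by
  have key := mul_add_deriv_eq_of_hasDerivAt_div_sqrt_eq_zero hf hg hpos hcrit
  field_simp
  linear_combination key

theorem stmt10_general (ε τ : ℝ) (hε0 : 0 < ε) (hε1 : ε < 1)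
    (tstar : ℝ)
    (hderiv : HasDerivAt
      (fun t => tprFn ε τ t / Real.sqrt (tprFn ε τ t + fprFn ε t)) 0 tstar) :
    lfdrFn ε τ tstar = (1 + fdrFn ε τ tstar) / 2 := by
  have hε : 0 < 1 - ε := by linarith
  have hrates_pos : 0 < tprFn ε τ tstar + fprFn ε tstar := by
    have := psiBar_pos τ tstar
    have := psiBar_pos 0 tstar
    unfold tprFn fprFn
    positivity
  have hdensities_pos : 0 < tprD ε τ tstar + fprD ε tstar := by
    have := gaussPDF_pos tstar
    have := gaussPDF_pos (tstar - τ)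
    have := gaussPDF_pos (tstar + τ)
    unfold tprD fprD
    positivity
  have h := tangent_secant_of_hasDerivAt_div_sqrt_eq_zero (hasDerivAt_tprFn ε τ tstar)
    (hasDerivAt_fprFn ε tstar) hrates_pos (by linarith) hderiv
  rwa [← neg_add, neg_div_neg_eq] at h

/-- Exact Tangent–Secant rule: at any critical point of t ↦ TPR/√(TPR+FPR),
Lfdr = (1 + FDR)/2. -/
theorem stmt10 (ε τ : ℝ) (hε0 : 0 < ε) (hε1 : ε < 1) (hτ : 0 < τ)
    (tstar : ℝ) (htstar : 0 < tstar)
    (hderiv : HasDerivAt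
      (fun t => tprFn ε τ t / Real.sqrt (tprFn ε τ t + fprFn ε t)) 0 tstar) :
    lfdrFn ε τ tstar = (1 + fdrFn ε τ tstar) / 2 :=
  stmt10_general ε τ hε0 hε1 tstar hderiv
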